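/- arXiv:1707.06344 — 3 statements merged into one kernel-verified Lean document; each statement's English description precedes it below -/
import Mathlib

section
/- Let G be a linearly ordered abelian group, p a positive integer, and a, b ∈ G. Suppose A is a convex subgroup with a ∉ A + pG such that every convex subgroup H with a ∉ H + pG satisfies H ⊆ A (i.e., A = H_p(a)), and B is a convex subgroup with b ∉ B + pG such that every convex subgroup H with b ∉ H + pG satisfies H ⊆ B (i.e., B = H_p(b)). If A is strictly contained in B, then there exists a' ∈ B such that a' ∉ A + pG and every convex subgroup H with a' ∉ H + pG satisfies H ⊆ A (i.e., H_p(a') = A = H_p(a)). -/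
/-- A subgroup `H` of a linearly ordered abelian group is convex if
`0 ≤ g ≤ h` with `h ∈ H` implies `g ∈ H`. -/
def IsConvexSubgroup {G : Type*} [AddCommGroup G] [LinearOrder G] [IsOrderedAddMonoid G] (H : AddSubgroup G) : Prop :=
  ∀ g h : G, h ∈ H → 0 ≤ g → g ≤ h → g ∈ H

/-- `a` lies in `H + nG`, i.e. `a = h + n•g` for some `h ∈ H` and `g ∈ G`. -/
def MemAddNSMul {G : Type*} [AddCommGroup G] (H : AddSubgroup G) (n : ℕ) (a : G) : Prop :=
  ∃ h ∈ H, ∃ g : G, a = h + n • g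

theorem memAddNSMul_add_nsmul_iff {G : Type*} [AddCommGroup G] {H : AddSubgroup G} {n : ℕ}
    {a g : G} : MemAddNSMul H n (a + n • g) ↔ MemAddNSMul H n a := by
  constructor
  · rintro ⟨h, hh, g', e⟩
    exact ⟨h, hh, g' - g, by rw [smul_sub, ← add_sub_assoc, ← e, add_sub_cancel_right]⟩
  · rintro ⟨h, hh, g', rfl⟩
    exact ⟨h, hh, g' + g, by rw [smul_add, add_assoc]⟩

theorem exists_coord_in_larger_general {G : Type*} [AddCommGroup G] [LinearOrder G] [IsOrderedAddMonoid G]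
    (p : ℕ) (a : G)
    (A : AddSubgroup G) (hAa : ¬ MemAddNSMul A p a)
    (hAmax : ∀ H : AddSubgroup G, IsConvexSubgroup H → ¬ MemAddNSMul H p a → H ≤ A)
    (B : AddSubgroup G) (hBconv : IsConvexSubgroup B)
    (hAB : A < B) :
    ∃ a' ∈ B, ¬ MemAddNSMul A p a' ∧
      ∀ H : AddSubgroup G, IsConvexSubgroup H → ¬ MemAddNSMul H p a' → H ≤ A := by
  -- `B ⊄ A`, so maximality of `A` forces `a ∈ B + pG`; its `B`-component is the witness.
  obtain ⟨a', ha'B, g, rfl⟩ : MemAddNSMul B p a :=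
    not_not.mp fun haB => hAB.not_ge (hAmax B hBconv haB)
  refine ⟨a', ha'B, fun hA => hAa (memAddNSMul_add_nsmul_iff.mpr hA), fun H hH ha'H => ?_⟩
  exact hAmax H hH fun haH => ha'H (memAddNSMul_add_nsmul_iff.mp haH)

/-- If `H_p(a) = A ⊊ B = H_p(b)`, then there is `a' ∈ B` with `H_p(a') = A`. -/
theorem exists_coord_in_larger {G : Type*} [AddCommGroup G] [LinearOrder G] [IsOrderedAddMonoid G]
    (p : ℕ) (hp : 0 < p) (a b : G)
    (A : AddSubgroup G) (hAconv : IsConvexSubgroup A) (hAa : ¬ MemAddNSMul A p a)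
    (hAmax : ∀ H : AddSubgroup G, IsConvexSubgroup H → ¬ MemAddNSMul H p a → H ≤ A)
    (B : AddSubgroup G) (hBconv : IsConvexSubgroup B) (hBb : ¬ MemAddNSMul B p b)
    (hBmax : ∀ H : AddSubgroup G, IsConvexSubgroup H → ¬ MemAddNSMul H p b → H ≤ B)
    (hAB : A < B) :
    ∃ a' ∈ B, ¬ MemAddNSMul A p a' ∧
      ∀ H : AddSubgroup G, IsConvexSubgroup H → ¬ MemAddNSMul H p a' → H ≤ A :=
  exists_coord_in_larger_general p a A hAa hAmax B hBconv hAB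
end

section
/- Let G be a linearly ordered abelian group, p a prime, and n, m positive integers. Suppose given convex subgroups E_1 ⊆ E_2 ⊆ ⋯ ⊆ E_{n+1} of G, and for each i ∈ {1, …, n} and j ∈ {1, …, m} a convex subgroup F_{i,j} and an element f_{i,j} ∈ G such that: E_i ⊆ F_{i,1}; F_{i,j} ⊆ F_{i,j+1} for j < m; F_{i,m} ⊆ E_{i+1}; f_{i,j} ∉ F_{i,j} + pG for all j; f_{i,j} ∈ F_{i,j+1} for j < m; and f_{i,m} ∈ E_{i+1}. Set c_{i,j} := p^i•f_{i,j}. Then for every function η : {1, …, n} → {1, …, m} there exists a ∈ G such that for all i ∈ {1, …, n} and j ∈ {1, …, m}: a - c_{i,j} ∈ E_i + p^{i+1}G if and only if j = η(i). -/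
/-!
The witness is `a = ∑ₖ pᵏ • f_{k,η(k)}`. Modulo `E_i + p^{i+1}G` the terms with `k < i` vanish,
because `f_{k,η(k)} ∈ E_{k+1} ⊆ E_i`, and so do those with `k > i`, so `a - c_{i,j}` is congruent
to `pⁱ • (f_{i,η(i)} - f_{i,j})`. For `j₁ < j₂`, if `pⁱ • (f_{i,j₂} - f_{i,j₁})` lay in
`E_i + p^{i+1}G`, then convexity of `E_i` would let us divide by `pⁱ`, putting
`f_{i,j₂} - f_{i,j₁}` in `E_i + pG ⊆ F_{i,j₂} + pG`; as `f_{i,j₁} ∈ F_{i,j₂}`, this contradicts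
`f_{i,j₂} ∉ F_{i,j₂} + pG`.
-/

open AddSubgroup

section

variable {G : Type*} [AddCommGroup G]

theorem memAddNSMul_iff_mem_sup {H : AddSubgroup G} {n : ℕ} {a : G} :
    MemAddNSMul H n a ↔ a ∈ H ⊔ (nsmulAddMonoidHom n).range := by
  simp only [MemAddNSMul, mem_sup, AddMonoidHom.mem_range, nsmulAddMonoidHom_apply]
  constructor
  · rintro ⟨h, hh, g, rfl⟩
    exact ⟨h, hh, _, ⟨g, rfl⟩, rfl⟩
  · rintro ⟨h, hh, _, ⟨g, rfl⟩, rfl⟩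
    exact ⟨h, hh, g, rfl⟩

theorem sum_pow_smul_sub_mem_sup {H : AddSubgroup G} (p : ℕ) {s : Finset ℕ} {x : ℕ → G}
    {i : ℕ} (hi : i ∈ s) (hx : ∀ k ∈ s, k < i → x k ∈ H) :
    ∑ k ∈ s, p ^ k • x k - p ^ i • x i ∈ H ⊔ (nsmulAddMonoidHom (p ^ (i + 1))).range := by
  rw [← Finset.add_sum_erase s _ hi, add_sub_cancel_left]
  refine sum_mem fun k hk => ?_
  obtain ⟨hki, hks⟩ := Finset.mem_erase.1 hk
  rcases hki.lt_or_gt with hlt | hgt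
  · exact mem_sup_left (nsmul_mem (hx k hks hlt) _)
  · refine mem_sup_right ⟨p ^ (k - (i + 1)) • x k, ?_⟩
    rw [nsmulAddMonoidHom_apply, smul_smul, ← pow_add, Nat.add_sub_cancel' hgt]

variable [LinearOrder G] [IsOrderedAddMonoid G] {H : AddSubgroup G}

theorem IsConvexSubgroup.mem_of_nsmul_mem (hH : IsConvexSubgroup H) {k : ℕ} (hk : k ≠ 0) {x : G}
    (hx : k • x ∈ H) : x ∈ H := by
  have hnonneg : ∀ y : G, 0 ≤ y → k • y ∈ H → y ∈ H := fun y hy hky =>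
    hH y (k • y) hky hy (by simpa using nsmul_le_nsmul_left hy (Nat.one_le_iff_ne_zero.2 hk))
  rcases le_total 0 x with hx0 | hx0
  · exact hnonneg x hx0 hx
  · simpa using hnonneg (-x) (neg_nonneg.2 hx0) (by simpa using neg_mem hx)

theorem IsConvexSubgroup.mem_sup_range_of_nsmul_mem (hH : IsConvexSubgroup H) {N p : ℕ}
    (hN : N ≠ 0) {x : G} (hx : N • x ∈ H ⊔ (nsmulAddMonoidHom (N * p)).range) :
    x ∈ H ⊔ (nsmulAddMonoidHom p).range := by
  obtain ⟨h, hh, _, ⟨g, rfl⟩, hsum⟩ := mem_sup.1 hx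
  have hxg : x - p • g ∈ H := by
    refine hH.mem_of_nsmul_mem hN ?_
    rwa [smul_sub, smul_smul, ← hsum, nsmulAddMonoidHom_apply, add_sub_cancel_right]
  rw [← sub_add_cancel x (p • g)]
  exact add_mem (mem_sup_left hxg) (mem_sup_right ⟨g, rfl⟩)

theorem IsConvexSubgroup.nsmul_sub_notMem_sup {K : AddSubgroup G} (hH : IsConvexSubgroup H)
    (hHK : H ≤ K) {N p : ℕ} (hN : N ≠ 0) {x y : G} (hx : x ∉ K ⊔ (nsmulAddMonoidHom p).range)
    (hy : y ∈ K) : N • (x - y) ∉ H ⊔ (nsmulAddMonoidHom (N * p)).range := fun h => hx <| by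
  rw [← sub_add_cancel x y]
  exact add_mem (sup_le_sup_right hHK _ (hH.mem_sup_range_of_nsmul_mem hN h)) (mem_sup_left hy)

theorem IsConvexSubgroup.nsmul_sub_notMem_sup_of_lt (hH : IsConvexSubgroup H)
    {F : ℕ → AddSubgroup G} {f : ℕ → G} {m N p : ℕ} (hN : N ≠ 0)
    (hF : MonotoneOn F (Set.Icc 1 m)) (hHF : H ≤ F 1)
    (hfmem : ∀ j, 1 ≤ j → j < m → f j ∈ F (j + 1))
    (hfF : ∀ j, 1 ≤ j → j ≤ m → f j ∉ F j ⊔ (nsmulAddMonoidHom p).range)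
    {j₁ j₂ : ℕ} (hj₁ : 1 ≤ j₁) (hlt : j₁ < j₂) (hj₂ : j₂ ≤ m) :
    N • (f j₂ - f j₁) ∉ H ⊔ (nsmulAddMonoidHom (N * p)).range :=
  hH.nsmul_sub_notMem_sup (hHF.trans (hF ⟨le_rfl, by omega⟩ ⟨by omega, hj₂⟩ (by omega))) hN
    (hfF j₂ (by omega) hj₂)
    (hF ⟨by omega, by omega⟩ ⟨by omega, hj₂⟩ hlt (hfmem j₁ hj₁ (by omega)))

theorem IsConvexSubgroup.nsmul_sub_mem_sup_iff (hH : IsConvexSubgroup H)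
    {F : ℕ → AddSubgroup G} {f : ℕ → G} {m N p : ℕ} (hN : N ≠ 0)
    (hF : MonotoneOn F (Set.Icc 1 m)) (hHF : H ≤ F 1)
    (hfmem : ∀ j, 1 ≤ j → j < m → f j ∈ F (j + 1))
    (hfF : ∀ j, 1 ≤ j → j ≤ m → f j ∉ F j ⊔ (nsmulAddMonoidHom p).range)
    {j j' : ℕ} (hj : j ∈ Set.Icc 1 m) (hj' : j' ∈ Set.Icc 1 m) :
    N • (f j' - f j) ∈ H ⊔ (nsmulAddMonoidHom (N * p)).range ↔ j = j' := by
  refine ⟨fun h => ?_, by rintro rfl; simp⟩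
  by_contra hne
  rcases lt_or_gt_of_ne hne with hlt | hgt
  · exact hH.nsmul_sub_notMem_sup_of_lt hN hF hHF hfmem hfF hj.1 hlt hj'.2 h
  · refine hH.nsmul_sub_notMem_sup_of_lt hN hF hHF hfmem hfF hj'.1 hgt hj.2 ?_
    rw [← neg_sub, smul_neg]
    exact neg_mem h

end

theorem monotoneOn_Icc_of_le_add_one {α : Type*} [Preorder α] {f : ℕ → α} {a b : ℕ}
    (h : ∀ k, a ≤ k → k < b → f k ≤ f (k + 1)) : MonotoneOn f (Set.Icc a b) :=
  monotoneOn_of_le_succ Set.ordConnected_Icc fun k _ hk hk' => h k hk.1 (by simp at hk'; omega)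

theorem inp_pattern_general {G : Type*} [AddCommGroup G] [LinearOrder G] [IsOrderedAddMonoid G]
    (p : ℕ) (hp : p.Prime) (n m : ℕ)
    (E : ℕ → AddSubgroup G) (F : ℕ → ℕ → AddSubgroup G) (f : ℕ → ℕ → G)
    (hEconv : ∀ i, 1 ≤ i → i ≤ n + 1 → IsConvexSubgroup (E i))
    (hEchain : ∀ i, 1 ≤ i → i ≤ n → E i ≤ E (i + 1))
    (hEF : ∀ i, 1 ≤ i → i ≤ n → E i ≤ F i 1)
    (hFchain : ∀ i j, 1 ≤ i → i ≤ n → 1 ≤ j → j < m → F i j ≤ F i (j + 1))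
    (hFE : ∀ i, 1 ≤ i → i ≤ n → F i m ≤ E (i + 1))
    (hfF : ∀ i j, 1 ≤ i → i ≤ n → 1 ≤ j → j ≤ m → ¬ MemAddNSMul (F i j) p (f i j))
    (hfmem : ∀ i j, 1 ≤ i → i ≤ n → 1 ≤ j → j < m → f i j ∈ F i (j + 1))
    (hfE : ∀ i, 1 ≤ i → i ≤ n → f i m ∈ E (i + 1)) :
    ∀ η : ℕ → ℕ, (∀ i, 1 ≤ i → i ≤ n → 1 ≤ η i ∧ η i ≤ m) →
      ∃ a : G, ∀ i j, 1 ≤ i → i ≤ n → 1 ≤ j → j ≤ m →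
        (MemAddNSMul (E i) (p ^ (i + 1)) (a - p ^ i • f i j) ↔ j = η i) := by
  intro η hη
  have hEmono : MonotoneOn E (Set.Icc 1 (n + 1)) :=
    monotoneOn_Icc_of_le_add_one fun k hk hkn => hEchain k hk (by omega)
  have hFmono (i) (hi : 1 ≤ i) (hin : i ≤ n) : MonotoneOn (F i) (Set.Icc 1 m) :=
    monotoneOn_Icc_of_le_add_one (hFchain i · hi hin)
  have hchosen (k) (hk : 1 ≤ k) (hkn : k ≤ n) : f k (η k) ∈ E (k + 1) := by
    obtain ⟨hη1, hηm⟩ := hη k hk hkn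
    rcases hηm.lt_or_eq with hlt | heq
    · exact hFE k hk hkn <| hFmono k hk hkn ⟨by omega, hlt⟩ ⟨by omega, le_rfl⟩ hlt <|
        hfmem k (η k) hk hkn hη1 hlt
    · exact heq ▸ hfE k hk hkn
  refine ⟨∑ k ∈ Finset.Icc 1 n, p ^ k • f k (η k), fun i j hi hin hj hjm => ?_⟩
  have hothers := sum_pow_smul_sub_mem_sup (H := E i) p (Finset.mem_Icc.2 ⟨hi, hin⟩)
    fun k hk hki => hEmono ⟨by omega, by omega⟩ ⟨hi, by omega⟩ (by omega)
      (hchosen k (Finset.mem_Icc.1 hk).1 (Finset.mem_Icc.1 hk).2)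
  rw [memAddNSMul_iff_mem_sup, ← sub_add_sub_cancel _ (p ^ i • f i (η i)),
    add_mem_cancel_left hothers, ← smul_sub, pow_succ]
  exact (hEconv i hi (by omega)).nsmul_sub_mem_sup_iff (pow_ne_zero _ hp.ne_zero)
    (hFmono i hi hin) (hEF i hi hin) (hfmem i · hi hin)
    (fun j hj hjm => memAddNSMul_iff_mem_sup.not.1 (hfF i j hi hin hj hjm)) ⟨hj, hjm⟩ (hη i hi hin)

/-- The inp-pattern configuration: given chains of convex subgroups `E_i` and `F_{i,j}`
with witnesses `f_{i,j} ∉ F_{i,j} + pG`, for every choice function `η` there is an `a`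
congruent to `c_{i,j} = p^i • f_{i,j}` modulo `E_i + p^{i+1}G` exactly when `j = η i`. -/
theorem inp_pattern {G : Type*} [AddCommGroup G] [LinearOrder G] [IsOrderedAddMonoid G]
    (p : ℕ) (hp : p.Prime) (n m : ℕ) (hn : 0 < n) (hm : 0 < m)
    (E : ℕ → AddSubgroup G) (F : ℕ → ℕ → AddSubgroup G) (f : ℕ → ℕ → G)
    (hEconv : ∀ i, 1 ≤ i → i ≤ n + 1 → IsConvexSubgroup (E i))
    (hEchain : ∀ i, 1 ≤ i → i ≤ n → E i ≤ E (i + 1))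
    (hFconv : ∀ i j, 1 ≤ i → i ≤ n → 1 ≤ j → j ≤ m → IsConvexSubgroup (F i j))
    (hEF : ∀ i, 1 ≤ i → i ≤ n → E i ≤ F i 1)
    (hFchain : ∀ i j, 1 ≤ i → i ≤ n → 1 ≤ j → j < m → F i j ≤ F i (j + 1))
    (hFE : ∀ i, 1 ≤ i → i ≤ n → F i m ≤ E (i + 1))
    (hfF : ∀ i j, 1 ≤ i → i ≤ n → 1 ≤ j → j ≤ m → ¬ MemAddNSMul (F i j) p (f i j))
    (hfmem : ∀ i j, 1 ≤ i → i ≤ n → 1 ≤ j → j < m → f i j ∈ F i (j + 1))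
    (hfE : ∀ i, 1 ≤ i → i ≤ n → f i m ∈ E (i + 1)) :
    ∀ η : ℕ → ℕ, (∀ i, 1 ≤ i → i ≤ n → 1 ≤ η i ∧ η i ≤ m) →
      ∃ a : G, ∀ i j, 1 ≤ i → i ≤ n → 1 ≤ j → j ≤ m →
        (MemAddNSMul (E i) (p ^ (i + 1)) (a - p ^ i • f i j) ↔ j = η i) :=
  inp_pattern_general p hp n m E F f hEconv hEchain hEF hFchain hFE hfF hfmem hfE
end

section
/- Let p be a prime, let ℤ_{(p)} be the subring of ℚ consisting of all rationals expressible as a/b with a, b integers and b not divisible by p, let B be an infinite subset of ℝ linearly independent over ℤ_{(p)} (viewing ℝ as a ℤ_{(p)}-module via ℤ_{(p)} ⊆ ℚ ⊆ ℝ), and let G_p be the additive subgroup of ℝ underlying the ℤ_{(p)}-submodule spanned by B. For a positive integer k, let G := G_p^k be the direct sum of k copies of G_p (with componentwise addition). Then the quotient G / pG is infinite, and for every prime q ≠ p, qG = G. (That is, p is the unique singular prime of G_p^k.) -/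
/-- The set of rationals expressible as `a / b` with `b` not divisible by `p`,
i.e. the localization `ℤ_{(p)}` realized inside `ℚ`. -/
def ZLocSet (p : ℕ) : Set ℚ :=
  {q : ℚ | ∃ a b : ℤ, ¬ (p : ℤ) ∣ b ∧ q = (a : ℚ) / (b : ℚ)}

/-- The additive subgroup of `ℝ` underlying the `ℤ_{(p)}`-submodule spanned by `B`:
the additive closure of all products `q * b` with `q ∈ ℤ_{(p)}` and `b ∈ B`. -/
def GpSubgroup (p : ℕ) (B : Set ℝ) : AddSubgroup ℝ :=
  AddSubgroup.closure {y : ℝ | ∃ q ∈ ZLocSet p, ∃ b ∈ B, y = (q : ℝ) * b}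

/-- `B ⊆ ℝ` is linearly independent over `ℤ_{(p)}`: any finite `ℤ_{(p)}`-linear
combination of elements of `B` which vanishes has all coefficients zero. -/
def LinIndepOverZLoc (p : ℕ) (B : Set ℝ) : Prop :=
  ∀ (t : Finset ℝ) (c : ℝ → ℚ), ↑t ⊆ B → (∀ x ∈ t, c x ∈ ZLocSet p) →
    (∑ x ∈ t, (c x : ℝ) * x) = 0 → ∀ x ∈ t, c x = 0

/-- The subgroup `nG = {n • g : g ∈ G}` of an abelian group `G`. -/
def nSMulSubgroup (G : Type*) [AddCommGroup G] (n : ℕ) : AddSubgroup G where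
  carrier := Set.range fun g : G => n • g
  zero_mem' := ⟨0, smul_zero n⟩
  add_mem' := by
    rintro _ _ ⟨g, rfl⟩ ⟨g', rfl⟩
    exact ⟨g + g', smul_add n g g'⟩
  neg_mem' := by
    rintro _ ⟨g, rfl⟩
    exact ⟨-g, by simp [smul_neg]⟩

/-! Since a prime `q ≠ p` is a unit of `ℤ_{(p)}`, multiplication by `q⁻¹` maps the generators
`r b` (`r ∈ ℤ_{(p)}`, `b ∈ B`) of `G_p` to generators, so `G_p` is `q`-divisible. On the other hand,
distinct `b, b' ∈ B` stay distinct modulo `p G_p`: by linear independence, comparing coefficients of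
`b` in `b - b' = p g` would give `1 = p r` with `r ∈ ℤ_{(p)}`, i.e. `1 / p ∈ ℤ_{(p)}`. Both properties
pass to finite powers. -/

theorem nSMulSubgroup_pi_eq_top {ι : Type*} {G : ι → Type*} [∀ i, AddCommGroup (G i)] {n : ℕ}
    (h : ∀ i, nSMulSubgroup (G i) n = ⊤) : nSMulSubgroup (∀ i, G i) n = ⊤ := by
  refine (AddSubgroup.eq_top_iff' _).2 fun x => ?_
  choose g hg using fun i => (AddSubgroup.eq_top_iff' _).1 (h i) (x i)
  exact ⟨g, funext hg⟩

theorem infinite_quotient_nSMulSubgroup_pi {ι G : Type*} [Nonempty ι] [AddCommGroup G] (n : ℕ)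
    [Infinite (G ⧸ nSMulSubgroup G n)] : Infinite ((ι → G) ⧸ nSMulSubgroup (ι → G) n) := by
  let i := Classical.arbitrary ι
  refine Infinite.of_surjective
    (QuotientAddGroup.map (nSMulSubgroup (ι → G) n) (nSMulSubgroup G n)
      (Pi.evalAddMonoidHom (fun _ => G) i) ?_) ?_
  · rintro _ ⟨g, rfl⟩
    exact ⟨g i, rfl⟩
  · exact QuotientAddGroup.map_surjective_of_surjective _ _ _
      (QuotientAddGroup.mk_surjective.comp (Function.surjective_eval i)) _

section

variable {p : ℕ} {B : Set ℝ}

theorem mem_ZLocSet_iff {x : ℚ} : x ∈ ZLocSet p ↔ ¬ p ∣ x.den := by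
  constructor
  · rintro ⟨a, b, hb, rfl⟩ hden
    rw [← Rat.divInt_eq_div] at hden
    exact hb ((Int.natCast_dvd_natCast.2 hden).trans (Rat.den_dvd a b))
  · exact fun h => ⟨x.num, x.den, by exact_mod_cast h, (Rat.num_div_den x).symm⟩

theorem inv_natCast_mem_ZLocSet {n : ℕ} (hn : ¬ p ∣ n) : (n : ℚ)⁻¹ ∈ ZLocSet p :=
  ⟨1, n, by exact_mod_cast hn, by simp⟩

theorem natCast_mul_ne_one_of_mem_ZLocSet (hp : p.Prime) {x : ℚ} (hx : x ∈ ZLocSet p) :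
    (p : ℚ) * x ≠ 1 := by
  intro h
  rw [eq_inv_of_mul_eq_one_right h, mem_ZLocSet_iff, Rat.inv_natCast_den, if_neg hp.ne_zero] at hx
  exact hx dvd_rfl

def zLocSubring (hp : p.Prime) : Subring ℚ where
  carrier := ZLocSet p
  zero_mem' := mem_ZLocSet_iff.2 hp.not_dvd_one
  one_mem' := mem_ZLocSet_iff.2 hp.not_dvd_one
  add_mem' {x y} hx hy := mem_ZLocSet_iff.2 fun h =>
    (hp.dvd_mul.1 (h.trans (Rat.add_den_dvd x y))).elim
      (mem_ZLocSet_iff.1 hx) (mem_ZLocSet_iff.1 hy)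
  mul_mem' {x y} hx hy := mem_ZLocSet_iff.2 fun h =>
    (hp.dvd_mul.1 (h.trans (Rat.mul_den_dvd x y))).elim
      (mem_ZLocSet_iff.1 hx) (mem_ZLocSet_iff.1 hy)
  neg_mem' {x} hx := mem_ZLocSet_iff.2 (by simpa using mem_ZLocSet_iff.1 hx)

theorem zLocSubring_smul_eq_mul (hp : p.Prime) (s : zLocSubring hp) (x : ℝ) :
    s • x = ((s : ℚ) : ℝ) * x :=
  Rat.smul_def _ _

theorem GpSubgroup_le_span (hp : p.Prime) :
    GpSubgroup p B ≤ (Submodule.span (zLocSubring hp) B).toAddSubgroup := by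
  refine AddSubgroup.closure_le _ |>.2 ?_
  rintro _ ⟨q, hq, b, hb, rfl⟩
  rw [← zLocSubring_smul_eq_mul hp ⟨q, hq⟩]
  exact Submodule.smul_mem _ _ (Submodule.subset_span hb)

theorem LinIndepOverZLoc.linearIndepOn (hp : p.Prime) (hind : LinIndepOverZLoc p B) :
    LinearIndepOn (zLocSubring hp) id B := by
  refine linearIndepOn_iff.2 fun l hl hl0 => Finsupp.ext fun y => ?_
  by_contra hy
  refine hy (Subtype.ext (hind l.support (fun y => l y) hl (fun y _ => (l y).2) ?_ y
    (Finsupp.mem_support_iff.2 hy)))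
  simpa [Finsupp.linearCombination_apply, Finsupp.sum, zLocSubring_smul_eq_mul hp] using hl0

theorem sub_ne_nsmul_of_mem_GpSubgroup (hp : p.Prime) (hind : LinIndepOverZLoc p B) {b b' : ℝ}
    (hb : b ∈ B) (hb' : b' ∈ B) (hne : b ≠ b') {g : ℝ} (hg : g ∈ GpSubgroup p B) :
    b - b' ≠ p • g := by
  intro h
  obtain ⟨l, rfl⟩ := (Finsupp.mem_span_iff_linearCombination _ _ _).1 (GpSubgroup_le_span hp hg)
  have hcoeffs : Finsupp.single ⟨b, hb⟩ 1 - Finsupp.single ⟨b', hb'⟩ 1 = p • l :=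
    (hind.linearIndepOn hp).linearIndependent <| by
      rw [map_sub, map_nsmul, Finsupp.linearCombination_single, Finsupp.linearCombination_single]
      simpa using h
  have hcoeff_b : (1 : ℚ) = p * l ⟨b, hb⟩ := by
    simpa [hne.symm, nsmul_eq_mul] using congrArg Subtype.val (DFunLike.congr_fun hcoeffs ⟨b, hb⟩)
  exact natCast_mul_ne_one_of_mem_ZLocSet hp (l ⟨b, hb⟩).2 hcoeff_b.symm

theorem mem_GpSubgroup_of_mem (hp : p.Prime) {b : ℝ} (hb : b ∈ B) : b ∈ GpSubgroup p B :=
  AddSubgroup.subset_closure ⟨1, (zLocSubring hp).one_mem, b, hb, by simp⟩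

theorem infinite_quotient_GpSubgroup (hp : p.Prime) (hB : B.Infinite)
    (hind : LinIndepOverZLoc p B) :
    Infinite (GpSubgroup p B ⧸ nSMulSubgroup (GpSubgroup p B) p) := by
  have := hB.to_subtype
  refine Infinite.of_injective
    (fun b : B => QuotientAddGroup.mk (⟨b, mem_GpSubgroup_of_mem hp b.2⟩ : GpSubgroup p B)) ?_
  intro b b' h
  obtain ⟨g, hg⟩ := (QuotientAddGroup.eq_iff_sub_mem).1 h
  by_contra hne
  exact sub_ne_nsmul_of_mem_GpSubgroup hp hind b.2 b'.2 (Subtype.coe_ne_coe.2 hne) g.2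
    (congrArg Subtype.val hg).symm

theorem inv_natCast_mul_mem_GpSubgroup (hp : p.Prime) {n : ℕ} (hn : ¬ p ∣ n) {x : ℝ}
    (hx : x ∈ GpSubgroup p B) : (n : ℝ)⁻¹ * x ∈ GpSubgroup p B := by
  refine (AddSubgroup.closure_le
    (K := (GpSubgroup p B).comap (AddMonoidHom.mulLeft (n : ℝ)⁻¹))).2 ?_ hx
  rintro _ ⟨q, hq, b, hb, rfl⟩
  refine AddSubgroup.subset_closure ⟨(n : ℚ)⁻¹ * q,
    (zLocSubring hp).mul_mem (inv_natCast_mem_ZLocSet hn) hq, b, hb, ?_⟩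
  simp [mul_assoc]

theorem nSMulSubgroup_GpSubgroup_eq_top (hp : p.Prime) {n : ℕ} (hn : ¬ p ∣ n) :
    nSMulSubgroup (GpSubgroup p B) n = ⊤ := by
  have hn0 : (n : ℝ) ≠ 0 := Nat.cast_ne_zero.2 fun h => hn (h ▸ dvd_zero p)
  refine eq_top_iff.2 fun x _ => ⟨⟨_, inv_natCast_mul_mem_GpSubgroup hp hn x.2⟩, Subtype.ext ?_⟩
  simp [nsmul_eq_mul, hn0]

end

/-- `p` is the unique singular prime of `G_p^k`: the quotient `G/pG` is infinite,
and `qG = G` for any prime `q ≠ p`. -/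
theorem Gp_pow_singular_primes (p : ℕ) (hp : p.Prime) (B : Set ℝ) (hB : B.Infinite)
    (hind : LinIndepOverZLoc p B) (k : ℕ) (hk : 0 < k) :
    Infinite ((Fin k → (GpSubgroup p B)) ⧸ nSMulSubgroup (Fin k → (GpSubgroup p B)) p) ∧
    ∀ q : ℕ, q.Prime → q ≠ p →
      nSMulSubgroup (Fin k → (GpSubgroup p B)) q = ⊤ := by
  have := Fin.pos_iff_nonempty.1 hk
  have := infinite_quotient_GpSubgroup hp hB hind
  refine ⟨infinite_quotient_nSMulSubgroup_pi p, fun q hq hqp => ?_⟩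
  have hpq : ¬ p ∣ q := fun h => hqp ((Nat.prime_dvd_prime_iff_eq hp hq).1 h).symm
  exact nSMulSubgroup_pi_eq_top fun _ => nSMulSubgroup_GpSubgroup_eq_top hp hpq
end
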